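/- arXiv:0711.2532 — 4 statements merged into one kernel-verified Lean document; each statement's English description precedes it below -/
import Mathlib

section
/- Let p be a prime. For integers x, y, z let M₁(x,y,z) be the 4×4 rational matrix with rows (1/p, 0, y/p, x/p), (0, 1/p, x/p, z/p), (0, 0, p, 0), (0, 0, 0, p). Then each M₁(x,y,z) is symplectic and lies in the double coset Γ₂·S₂·Γ₂ ⊂ Sp₄(ℚ), where S₂ = diag(1/p, 1/p, p, p); moreover two such matrices M₁(x,y,z) and M₁(x′,y′,z′) lie in the same left coset Γ₂·M if and only if x ≡ x′, y ≡ y′ and z ≡ z′ (mod p²). In particular, for x, y, z ranging over 0, …, p²−1 one obtains p⁶ pairwise distinct left Γ₂-cosets inside Γ₂·S₂·Γ₂. -/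
open Matrix

/-!
STATEMENT 3: For a prime p, the matrices M₁(x,y,z) (for x,y,z ∈ ℤ) with rows
(1/p, 0, y/p, x/p), (0, 1/p, x/p, z/p), (0,0,p,0), (0,0,0,p) are symplectic and lie
in the double coset Γ₂·S₂·Γ₂ ⊂ Sp₄(ℚ) with S₂ = diag(1/p,1/p,p,p); two of them lie
in the same left Γ₂-coset iff x ≡ x′, y ≡ y′, z ≡ z′ (mod p²).  In particular the
M₁(x,y,z) with 0 ≤ x,y,z < p² give p⁶ pairwise distinct left cosets inside Γ₂·S₂·Γ₂.
-/

/-- The standard symplectic form `J = [[0, I₂],[−I₂, 0]]` of size 4 over ℚ. -/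
def Jmat : Matrix (Fin 4) (Fin 4) ℚ :=
  !![0, 0, 1, 0; 0, 0, 0, 1; -1, 0, 0, 0; 0, -1, 0, 0]

/-- A 4×4 rational matrix is symplectic if `gᵀ J g = J`. -/
def IsSymplectic (g : Matrix (Fin 4) (Fin 4) ℚ) : Prop := gᵀ * Jmat * g = Jmat

/-- A 4×4 rational matrix has integral entries. -/
def HasIntegralEntries (g : Matrix (Fin 4) (Fin 4) ℚ) : Prop := ∀ i j, ∃ n : ℤ, g i j = (n : ℚ)

/-- Membership in `Γ₂ = Sp₄(ℤ)`, viewed inside `Sp₄(ℚ)`. -/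
def MemGamma2 (g : Matrix (Fin 4) (Fin 4) ℚ) : Prop := IsSymplectic g ∧ HasIntegralEntries g

/-- The matrix `M₁(x,y,z)`. -/
def M₁ (p : ℕ) (x y z : ℤ) : Matrix (Fin 4) (Fin 4) ℚ :=
  !![(p : ℚ)⁻¹, 0, (y : ℚ) / p, (x : ℚ) / p;
     0, (p : ℚ)⁻¹, (x : ℚ) / p, (z : ℚ) / p;
     0, 0, (p : ℚ), 0;
     0, 0, 0, (p : ℚ)]

/-- The matrix `S₂ = diag(1/p, 1/p, p, p)`. -/
def S₂ (p : ℕ) : Matrix (Fin 4) (Fin 4) ℚ :=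
  !![(p : ℚ)⁻¹, 0, 0, 0; 0, (p : ℚ)⁻¹, 0, 0; 0, 0, (p : ℚ), 0; 0, 0, 0, (p : ℚ)]

/-
`M₁(x,y,z) = S₂ · n(y,x,z)`, where `n(b,c,d) = [[I, B],[0, I]]` with `B = [[b,c],[c,d]]`
is a unipotent symplectic matrix, integral exactly when `b, c, d` are integers; this gives
the double coset. Conjugating by `S₂` divides `B` by `p²`, so also
`M₁(x,y,z) = n(y/p², x/p², z/p²) · S₂`. Since `S₂` and the `n(B)` are invertible and
`n(B) n(B') = n(B + B')`, the only `γ` with `M₁(x,y,z) = γ · M₁(x',y',z')` is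
`n((y-y')/p², (x-x')/p², (z-z')/p²)`, which lies in `Γ₂` iff `p²` divides the three differences.
-/

theorem IsSymplectic.mul {g h : Matrix (Fin 4) (Fin 4) ℚ} (hg : IsSymplectic g)
    (hh : IsSymplectic h) : IsSymplectic (g * h) := by
  unfold IsSymplectic at *
  calc (g * h)ᵀ * Jmat * (g * h) = hᵀ * (gᵀ * Jmat * g) * h := by
        simp only [transpose_mul, Matrix.mul_assoc]
    _ = Jmat := by rw [hg, hh]

theorem IsSymplectic.isUnit {g : Matrix (Fin 4) (Fin 4) ℚ} (hg : IsSymplectic g) : IsUnit g := by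
  have hJ : Jmat * Jmat = -1 := by
    ext i j; fin_cases i <;> fin_cases j <;> simp [Jmat, mul_apply, Fin.sum_univ_four]
  have hinv : (-(Jmat * gᵀ * Jmat)) * g = 1 := by
    rw [neg_mul, Matrix.mul_assoc, Matrix.mul_assoc, ← Matrix.mul_assoc gᵀ, hg, hJ, neg_neg]
  exact (isUnit_iff_isUnit_det g).2 (isUnit_det_of_left_inverse hinv)

def unipotent (b c d : ℚ) : Matrix (Fin 4) (Fin 4) ℚ :=
  !![1, 0, b, c; 0, 1, c, d; 0, 0, 1, 0; 0, 0, 0, 1]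

theorem isSymplectic_unipotent (b c d : ℚ) : IsSymplectic (unipotent b c d) := by
  unfold IsSymplectic Jmat unipotent
  ext i j
  fin_cases i <;> fin_cases j <;> simp [mul_apply, Fin.sum_univ_four]

theorem unipotent_mul (b c d b' c' d' : ℚ) :
    unipotent b c d * unipotent b' c' d' = unipotent (b + b') (c + c') (d + d') := by
  ext i j
  fin_cases i <;> fin_cases j <;> simp [unipotent, mul_apply, Fin.sum_univ_four, add_comm]

theorem unipotent_zero : unipotent 0 0 0 = 1 := by
  ext i j
  fin_cases i <;> fin_cases j <;> simp [unipotent]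

theorem unipotent_eq_mul_unipotent_iff (γ : Matrix (Fin 4) (Fin 4) ℚ) (b c d b' c' d' : ℚ) :
    unipotent b c d = γ * unipotent b' c' d' ↔ γ = unipotent (b - b') (c - c') (d - d') := by
  rw [← (isSymplectic_unipotent b' c' d').isUnit.mul_left_inj (b := γ), unipotent_mul,
    sub_add_cancel, sub_add_cancel, sub_add_cancel, eq_comm]

theorem memGamma2_unipotent_iff (b c d : ℚ) :
    MemGamma2 (unipotent b c d) ↔ (∃ n : ℤ, b = n) ∧ (∃ n : ℤ, c = n) ∧ (∃ n : ℤ, d = n) := by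
  refine ⟨fun h => ⟨h.2 0 2, h.2 0 3, h.2 1 3⟩, ?_⟩
  rintro ⟨⟨nb, rfl⟩, ⟨nc, rfl⟩, ⟨nd, rfl⟩⟩
  refine ⟨isSymplectic_unipotent _ _ _, fun i j => ?_⟩
  fin_cases i <;> fin_cases j <;> simp only [unipotent, of_apply, cons_val', empty_val',
    cons_val_fin_one] <;>
    first | exact ⟨0, Int.cast_zero.symm⟩ | exact ⟨1, Int.cast_one.symm⟩ | exact ⟨_, rfl⟩

theorem exists_intCast_eq_div_iff {a m : ℤ} (hm : m ≠ 0) :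
    (∃ n : ℤ, (a : ℚ) / m = n) ↔ m ∣ a := by
  have hmQ : (m : ℚ) ≠ 0 := Int.cast_ne_zero.2 hm
  refine ⟨fun ⟨n, hn⟩ => ⟨n, ?_⟩, fun ⟨n, hn⟩ => ⟨n, ?_⟩⟩
  · rw [div_eq_iff hmQ] at hn
    exact_mod_cast hn.trans (mul_comm _ _)
  · rw [hn, Int.cast_mul, mul_div_cancel_left₀ _ hmQ]

section

variable {p : ℕ}

theorem isSymplectic_S₂ (hp : (p : ℚ) ≠ 0) : IsSymplectic (S₂ p) := by
  unfold IsSymplectic Jmat S₂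
  ext i j
  fin_cases i <;> fin_cases j <;> simp [mul_apply, Fin.sum_univ_four, hp]

theorem M₁_eq_S₂_mul_unipotent (x y z : ℤ) : M₁ p x y z = S₂ p * unipotent y x z := by
  ext i j
  fin_cases i <;> fin_cases j <;>
    simp [M₁, S₂, unipotent, mul_apply, Fin.sum_univ_four, div_eq_inv_mul]

theorem M₁_eq_unipotent_mul_S₂ (hp : (p : ℚ) ≠ 0) (x y z : ℤ) :
    M₁ p x y z = unipotent (y / p ^ 2) (x / p ^ 2) (z / p ^ 2) * S₂ p := by
  ext i j
  fin_cases i <;> fin_cases j <;>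
    simp [M₁, S₂, unipotent, mul_apply, Fin.sum_univ_four] <;> field_simp

theorem M₁_eq_mul_M₁_iff (hp : (p : ℚ) ≠ 0) (γ : Matrix (Fin 4) (Fin 4) ℚ)
    (x y z x' y' z' : ℤ) :
    M₁ p x y z = γ * M₁ p x' y' z' ↔
      γ = unipotent ((y - y') / p ^ 2) ((x - x') / p ^ 2) ((z - z') / p ^ 2) := by
  rw [M₁_eq_unipotent_mul_S₂ hp, M₁_eq_unipotent_mul_S₂ hp, ← Matrix.mul_assoc,
    (isSymplectic_S₂ hp).isUnit.mul_left_inj, unipotent_eq_mul_unipotent_iff]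
  simp only [sub_div]

end

theorem M₁_symplectic_double_coset_and_left_cosets (p : ℕ) (hp : p.Prime) :
    (∀ x y z : ℤ, IsSymplectic (M₁ p x y z))
    ∧
    (∀ x y z : ℤ, ∃ γ₁ γ₂ : Matrix (Fin 4) (Fin 4) ℚ,
      MemGamma2 γ₁ ∧ MemGamma2 γ₂ ∧ M₁ p x y z = γ₁ * S₂ p * γ₂)
    ∧
    (∀ x y z x' y' z' : ℤ,
      (∃ γ : Matrix (Fin 4) (Fin 4) ℚ, MemGamma2 γ ∧ M₁ p x y z = γ * M₁ p x' y' z') ↔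
        (x ≡ x' [ZMOD ((p : ℤ)^2)] ∧ y ≡ y' [ZMOD ((p : ℤ)^2)] ∧
          z ≡ z' [ZMOD ((p : ℤ)^2)])) := by
  have hp0 : (p : ℚ) ≠ 0 := Nat.cast_ne_zero.2 hp.ne_zero
  have hp2 : (p : ℤ) ^ 2 ≠ 0 := pow_ne_zero 2 (Nat.cast_ne_zero.2 hp.ne_zero)
  have hdiv (a b : ℤ) : (∃ n : ℤ, ((a : ℚ) - b) / p ^ 2 = n) ↔ (p : ℤ) ^ 2 ∣ a - b := by
    exact_mod_cast exists_intCast_eq_div_iff (a := a - b) hp2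
  refine ⟨fun x y z => ?_, fun x y z => ?_, fun x y z x' y' z' => ?_⟩
  · rw [M₁_eq_S₂_mul_unipotent]
    exact (isSymplectic_S₂ hp0).mul (isSymplectic_unipotent _ _ _)
  · refine ⟨unipotent 0 0 0, unipotent y x z, ?_, ?_, ?_⟩
    · exact (memGamma2_unipotent_iff _ _ _).2 ⟨⟨0, by simp⟩, ⟨0, by simp⟩, ⟨0, by simp⟩⟩
    · exact (memGamma2_unipotent_iff _ _ _).2 ⟨⟨y, rfl⟩, ⟨x, rfl⟩, ⟨z, rfl⟩⟩
    · rw [unipotent_zero, Matrix.one_mul, M₁_eq_S₂_mul_unipotent]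
  · simp only [M₁_eq_mul_M₁_iff hp0, exists_eq_right, memGamma2_unipotent_iff, hdiv,
      Int.modEq_comm (a := x), Int.modEq_comm (a := y), Int.modEq_comm (a := z),
      Int.modEq_iff_dvd]
    tauto
end

section
/- Fix k ∈ ℤ and a positive integer m. For g = [[a,b],[c,d]] ∈ SL₂(ℝ) define g^# := [[d,b],[c,a]] ∈ SL₂(ℝ). For (T,Z) ∈ ℍ₂×ℂ² with T = [[τ,u],[u,ζ]], Z = (z₁,z₂), define the 'upper' action g↑∘(T,Z) := ([[(aτ+b)/(cτ+d), u/(cτ+d)],[u/(cτ+d), ζ − cu²/(cτ+d)]], (z₁/(cτ+d), z₂ − cuz₁/(cτ+d))) with automorphy factor J↑(g,(T,Z)) := (cτ+d)^k·exp(2πi·m·c·z₁²/(cτ+d)), and the 'lower' action g↓∘(T,Z) := ([[τ − cu²/(cζ+d), u/(cζ+d)],[u/(cζ+d), (aζ+b)/(cζ+d)]], (z₁ − cuz₂/(cζ+d), z₂/(cζ+d))) with automorphy factor J↓(g,(T,Z)) := (cζ+d)^k·exp(2πi·m·c·z₂²/(cζ+d)). Then for every g ∈ SL₂(ℝ) and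 every (T,Z) ∈ ℍ₂×ℂ² one has ψ_{k,m}(g↑∘(T,Z)) · J↑(g,(T,Z)) = ψ_{k,m}(g^#↓∘(T,Z)) · J↓(g^#,(T,Z)); equivalently, the slashed functions ψ_{k,m}^{-1}|_{k,m} g↑ and ψ_{k,m}^{-1}|_{k,m} (g^#)↓ coincide. -/
/-!
Put `Q := c·(τζ − u²) + aτ + b + dζ + 2u`, so that `Q = (cτ + d)·tr(g↑T) = (cζ + a)·tr(g^#↓T)`
with `tr T = τ + 2u + ζ`. Both sides equal `Q^k · exp(2πim · N / Q)` with
`N = (cζ + a)z₁² + 2(1 − cu)z₁z₂ + (cτ + d)z₂²`. For the left side this is the identity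
`(1 − cu)² + c·Q = (cτ + d)(cζ + a)`, which is `ad − bc = 1` in disguise. The right side is the
image of the left one under `τ ↔ ζ`, `z₁ ↔ z₂`, `a ↔ d`, which fixes `ψ`, `Q` and `N`.
The denominators `cτ + d`, `cζ + a` and `Q` do not vanish because `Im T` is positive definite.
-/

open Complex

/-- `ψ_{k,m}(T,Z) = (τ+2u+ζ)^k · exp(2πi·m·(z₁+z₂)²/(τ+2u+ζ))`. -/
noncomputable def psi (k : ℤ) (m : ℕ) (τ u ζ z₁ z₂ : ℂ) : ℂ :=
  (τ + 2 * u + ζ) ^ k *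
    Complex.exp (2 * (Real.pi : ℂ) * I * (m : ℂ) * (z₁ + z₂) ^ 2 / (τ + 2 * u + ζ))

open ComplexConjugate Matrix

lemma psi_comm (k : ℤ) (m : ℕ) (τ u ζ z₁ z₂ : ℂ) :
    psi k m τ u ζ z₁ z₂ = psi k m ζ u τ z₂ z₁ := by
  simp only [psi, add_comm z₁ z₂, show τ + 2 * u + ζ = ζ + 2 * u + τ by ring]

def traceNumerator (a b c d τ u ζ : ℂ) : ℂ :=
  c * (τ * ζ - u ^ 2) + a * τ + b + d * ζ + 2 * u

lemma traceNumerator_swap (a b c d τ u ζ : ℂ) :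
    traceNumerator d b c a ζ u τ = traceNumerator a b c d τ u ζ := by
  rw [traceNumerator, traceNumerator]
  ring

lemma sq_one_sub_add_mul_traceNumerator {a b c d : ℂ} (hg : a * d - b * c = 1) (τ u ζ : ℂ) :
    (1 - c * u) ^ 2 + c * traceNumerator a b c d τ u ζ = (c * τ + d) * (c * ζ + a) := by
  rw [traceNumerator]
  linear_combination -hg

lemma up_trace_eq {a b c d τ : ℂ} (hX : c * τ + d ≠ 0) (u ζ : ℂ) :
    (a * τ + b) / (c * τ + d) + 2 * (u / (c * τ + d)) + (ζ - c * u ^ 2 / (c * τ + d)) =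
      traceNumerator a b c d τ u ζ / (c * τ + d) := by
  rw [traceNumerator]
  linear_combination (-ζ) * mul_inv_cancel₀ hX

lemma psi_up_slash_eq (k : ℤ) (m : ℕ) {a b c d : ℂ} (hg : a * d - b * c = 1) {τ u ζ : ℂ}
    (hX : c * τ + d ≠ 0) (hQ : traceNumerator a b c d τ u ζ ≠ 0) (z₁ z₂ : ℂ) :
    psi k m ((a * τ + b) / (c * τ + d)) (u / (c * τ + d)) (ζ - c * u ^ 2 / (c * τ + d))
        (z₁ / (c * τ + d)) (z₂ - c * u * z₁ / (c * τ + d)) *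
      ((c * τ + d) ^ k * exp (2 * (Real.pi : ℂ) * I * m * c * z₁ ^ 2 / (c * τ + d))) =
    traceNumerator a b c d τ u ζ ^ k *
      exp (2 * (Real.pi : ℂ) * I * m *
        ((c * ζ + a) * z₁ ^ 2 + 2 * (1 - c * u) * z₁ * z₂ + (c * τ + d) * z₂ ^ 2) /
        traceNumerator a b c d τ u ζ) := by
  have hexp : ∀ e : ℂ, e * (z₁ / (c * τ + d) + (z₂ - c * u * z₁ / (c * τ + d))) ^ 2 /
        (traceNumerator a b c d τ u ζ / (c * τ + d)) + e * c * z₁ ^ 2 / (c * τ + d) =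
      e * ((c * ζ + a) * z₁ ^ 2 + 2 * (1 - c * u) * z₁ * z₂ + (c * τ + d) * z₂ ^ 2) /
        traceNumerator a b c d τ u ζ := by
    intro e
    field_simp
    linear_combination e * z₁ ^ 2 * sq_one_sub_add_mul_traceNumerator hg τ u ζ
  rw [psi, up_trace_eq hX, mul_mul_mul_comm, ← exp_add, hexp, div_zpow,
    div_mul_cancel₀ _ (zpow_ne_zero k hX)]

lemma ofReal_mul_add_ofReal_ne_zero {a b c d : ℝ} (hg : a * d - b * c = 1) {z : ℂ}
    (hz : 0 < z.im) : (c : ℂ) * z + d ≠ 0 := by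
  refine UpperHalfPlane.linear_ne_zero_of_im (cd := ![c, d]) hz.ne' fun h ↦ ?_
  simp only [funext_iff, Fin.forall_fin_two] at h
  simp_all

lemma Matrix.dotProduct_mulVec_fin_two_symm (p q r x y : ℝ) :
    star ![x, y] ⬝ᵥ (!![p, q; q, r] *ᵥ ![x, y]) = p * x ^ 2 + 2 * q * x * y + r * y ^ 2 := by
  simp only [star_trivial, dotProduct, Fin.sum_univ_two]
  simp
  ring

lemma traceNumerator_ne_zero {a b c d : ℝ} (hg : a * d - b * c = 1) {τ u ζ : ℂ}
    (hT : (!![τ.im, u.im; u.im, ζ.im] : Matrix (Fin 2) (Fin 2) ℝ).PosDef) :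
    traceNumerator a b c d τ u ζ ≠ 0 := by
  set x := 1 - c * u.re
  set y := c * τ.re + d
  -- `Q · conj(cτ + d) = |cτ + d|² · tr(g↑T)`: the `Im T`-form at `(x, y)` plus `c² Im τ det(Im T)`.
  have him : (traceNumerator a b c d τ u ζ * conj ((c : ℂ) * τ + d)).im =
      τ.im * x ^ 2 + 2 * u.im * x * y + ζ.im * y ^ 2 +
        c ^ 2 * τ.im * (τ.im * ζ.im - u.im ^ 2) := by
    simp only [traceNumerator, x, y, mul_im, mul_re, add_im, add_re, sub_im, sub_re, ofReal_re,
      ofReal_im, conj_re, conj_im, pow_two, re_ofNat, im_ofNat]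
    linear_combination τ.im * hg
  have hτ : 0 < τ.im := by simpa using hT.diag_pos (i := 0)
  have hdet : 0 < τ.im * ζ.im - u.im ^ 2 := by
    simpa [Matrix.det_fin_two_of, sq] using hT.det_pos
  have hpos : 0 < τ.im * x ^ 2 + 2 * u.im * x * y + ζ.im * y ^ 2 +
      c ^ 2 * τ.im * (τ.im * ζ.im - u.im ^ 2) := by
    rcases eq_or_ne c 0 with hc | hc
    · have hform := hT.dotProduct_mulVec_pos (x := ![x, y]) (by simp [x, hc])
      rw [Matrix.dotProduct_mulVec_fin_two_symm] at hform
      rw [hc]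
      linarith
    · have hform := hT.posSemidef.dotProduct_mulVec_nonneg ![x, y]
      rw [Matrix.dotProduct_mulVec_fin_two_symm] at hform
      have : 0 < c ^ 2 * τ.im * (τ.im * ζ.im - u.im ^ 2) := by positivity
      linarith
  intro h
  rw [h, zero_mul, zero_im] at him
  linarith

theorem psi_up_slash_eq_sharp_down_slash_general (k : ℤ) (m : ℕ)
    (a b c d : ℝ) (hg : a * d - b * c = 1) (τ u ζ z₁ z₂ : ℂ)
    (hT : (!![τ.im, u.im; u.im, ζ.im] : Matrix (Fin 2) (Fin 2) ℝ).PosDef) :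
    psi k m
        (((a : ℂ) * τ + (b : ℂ)) / ((c : ℂ) * τ + (d : ℂ)))
        (u / ((c : ℂ) * τ + (d : ℂ)))
        (ζ - (c : ℂ) * u ^ 2 / ((c : ℂ) * τ + (d : ℂ)))
        (z₁ / ((c : ℂ) * τ + (d : ℂ)))
        (z₂ - (c : ℂ) * u * z₁ / ((c : ℂ) * τ + (d : ℂ))) *
      (((c : ℂ) * τ + (d : ℂ)) ^ k *
        Complex.exp (2 * (Real.pi : ℂ) * I * (m : ℂ) * (c : ℂ) * z₁ ^ 2 /
          ((c : ℂ) * τ + (d : ℂ)))) =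
    psi k m
        (τ - (c : ℂ) * u ^ 2 / ((c : ℂ) * ζ + (a : ℂ)))
        (u / ((c : ℂ) * ζ + (a : ℂ)))
        (((d : ℂ) * ζ + (b : ℂ)) / ((c : ℂ) * ζ + (a : ℂ)))
        (z₁ - (c : ℂ) * u * z₂ / ((c : ℂ) * ζ + (a : ℂ)))
        (z₂ / ((c : ℂ) * ζ + (a : ℂ))) *
      (((c : ℂ) * ζ + (a : ℂ)) ^ k *
        Complex.exp (2 * (Real.pi : ℂ) * I * (m : ℂ) * (c : ℂ) * z₂ ^ 2 /
          ((c : ℂ) * ζ + (a : ℂ)))) := by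
  have hg' : d * a - b * c = 1 := by linear_combination hg
  have hX : (c : ℂ) * τ + d ≠ 0 :=
    ofReal_mul_add_ofReal_ne_zero hg (by simpa using hT.diag_pos (i := 0))
  have hW : (c : ℂ) * ζ + a ≠ 0 :=
    ofReal_mul_add_ofReal_ne_zero hg' (by simpa using hT.diag_pos (i := 1))
  have hQ := traceNumerator_ne_zero hg hT
  rw [psi_comm k m (τ - _), psi_up_slash_eq k m (by exact_mod_cast hg) hX hQ,
    psi_up_slash_eq k m (by exact_mod_cast hg') hW (by rwa [traceNumerator_swap]),
    traceNumerator_swap]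
  ring_nf

theorem psi_up_slash_eq_sharp_down_slash (k : ℤ) (m : ℕ) (hm : 0 < m)
    (a b c d : ℝ) (hg : a * d - b * c = 1) (τ u ζ z₁ z₂ : ℂ)
    (hT : (!![τ.im, u.im; u.im, ζ.im] : Matrix (Fin 2) (Fin 2) ℝ).PosDef) :
    psi k m
        (((a : ℂ) * τ + (b : ℂ)) / ((c : ℂ) * τ + (d : ℂ)))
        (u / ((c : ℂ) * τ + (d : ℂ)))
        (ζ - (c : ℂ) * u ^ 2 / ((c : ℂ) * τ + (d : ℂ)))
        (z₁ / ((c : ℂ) * τ + (d : ℂ)))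
        (z₂ - (c : ℂ) * u * z₁ / ((c : ℂ) * τ + (d : ℂ))) *
      (((c : ℂ) * τ + (d : ℂ)) ^ k *
        Complex.exp (2 * (Real.pi : ℂ) * I * (m : ℂ) * (c : ℂ) * z₁ ^ 2 /
          ((c : ℂ) * τ + (d : ℂ)))) =
    psi k m
        (τ - (c : ℂ) * u ^ 2 / ((c : ℂ) * ζ + (a : ℂ)))
        (u / ((c : ℂ) * ζ + (a : ℂ)))
        (((d : ℂ) * ζ + (b : ℂ)) / ((c : ℂ) * ζ + (a : ℂ)))
        (z₁ - (c : ℂ) * u * z₂ / ((c : ℂ) * ζ + (a : ℂ)))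
        (z₂ / ((c : ℂ) * ζ + (a : ℂ))) *
      (((c : ℂ) * ζ + (a : ℂ)) ^ k *
        Complex.exp (2 * (Real.pi : ℂ) * I * (m : ℂ) * (c : ℂ) * z₂ ^ 2 /
          ((c : ℂ) * ζ + (a : ℂ)))) :=
  psi_up_slash_eq_sharp_down_slash_general k m a b c d hg τ u ζ z₁ z₂ hT
end

section
/- Fix k ∈ ℤ and a positive integer m. For Λ, Μ ∈ ℝ² and Κ ∈ ℝ define the Heisenberg action (Λ,Μ,Κ)∘(T,Z) := (T, Z + ΛT + Μ) on ℍ₂×ℂ² and the automorphy factor J_m((Λ,Μ,Κ),(T,Z)) := exp(−2πi·m·(Λ T Λᵀ + 2ΛZᵀ + Κ + ΜΛᵀ)). Then for all real λ, μ, κ and all (T,Z) ∈ ℍ₂×ℂ²: (i) ψ_{k,m}(((λ,0),(0,0),0)∘(T,Z)) · J_m(((λ,0),(0,0),0),(T,Z)) = ψ_{k,m}(((0,−λ),(0,0),0)∘(T,Z)) · J_m(((0,−λ),(0,0),0),(T,Z)); and (ii) ψ_{k,m}(((0,0),(μ,0),κ)∘(T,Z)) · J_m(((0,0),(μ,0),κ),(T,Z))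 = ψ_{k,m}(((0,0),(0,μ),κ)∘(T,Z)) · J_m(((0,0),(0,μ),κ),(T,Z)). Equivalently, ψ_{k,m}^{-1} slashed with the embedded Heisenberg element (λ,0,0)↑ equals ψ_{k,m}^{-1} slashed with (−λ,0,0)↓, and ψ_{k,m}^{-1} slashed with (0,μ,κ)↑ equals ψ_{k,m}^{-1} slashed with (0,μ,κ)↓. -/
/-!
`ψ_{k,m}` depends on `Z` only through `z₁ + z₂`. The shifts `Z ↦ Z + (λ,0)T` and
`Z ↦ Z + (0,-λ)T` move `z₁ + z₂` by `λ(τ+u)` and `-λ(u+ζ)`, which differ by `λ(τ+2u+ζ)`;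
completing the square, `ψ` is quasi-periodic under that shift with an exponential factor that
is exactly the ratio of the two automorphy factors. This needs `τ+2u+ζ ≠ 0`, which holds because
`Im T` is positive definite. Under the translations by `(μ,0)` and `(0,μ)` both sides agree term
by term.
-/

open Complex

/-- First coordinate of `Z + ΛT + Μ` for `Λ = (l₁,l₂)`, `Μ = (m₁,m₂)`,
`T = [[τ,u],[u,ζ]]`, `Z = (z₁,z₂)`. -/
noncomputable def heisZ₁ (l₁ l₂ m₁ : ℝ) (τ u z₁ : ℂ) : ℂ :=
  z₁ + (l₁ : ℂ) * τ + (l₂ : ℂ) * u + (m₁ : ℂ)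

/-- Second coordinate of `Z + ΛT + Μ`. -/
noncomputable def heisZ₂ (l₁ l₂ m₂ : ℝ) (u ζ z₂ : ℂ) : ℂ :=
  z₂ + (l₁ : ℂ) * u + (l₂ : ℂ) * ζ + (m₂ : ℂ)

/-- The automorphy factor
`J_m((Λ,Μ,Κ),(T,Z)) = exp(−2πi·m·(ΛTΛᵀ + 2ΛZᵀ + Κ + ΜΛᵀ))`. -/
noncomputable def heisJ (m : ℕ) (l₁ l₂ m₁ m₂ kap : ℝ) (τ u ζ z₁ z₂ : ℂ) : ℂ :=
  Complex.exp (-(2 * (Real.pi : ℂ) * I * (m : ℂ) *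
    ((l₁ : ℂ) ^ 2 * τ + 2 * (l₁ : ℂ) * (l₂ : ℂ) * u + (l₂ : ℂ) ^ 2 * ζ +
      2 * ((l₁ : ℂ) * z₁ + (l₂ : ℂ) * z₂) + (kap : ℂ) +
      ((m₁ : ℂ) * (l₁ : ℂ) + (m₂ : ℂ) * (l₂ : ℂ)))))

theorem Matrix.PosDef.add_two_mul_add_pos {a b c : ℝ} (h : (!![a, b; b, c]).PosDef) :
    0 < a + 2 * b + c :=
  calc 0 < star ![1, 1] ⬝ᵥ (!![a, b; b, c]).mulVec (![1, 1] : Fin 2 → ℝ) :=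
        h.dotProduct_mulVec_pos (by simp [funext_iff, Fin.forall_fin_two])
    _ = a + 2 * b + c := by
        simp [dotProduct, Matrix.mulVec, Fin.sum_univ_two, two_mul, add_assoc]

theorem Complex.add_two_mul_add_ne_zero_of_posDef_im {τ u ζ : ℂ}
    (hT : (!![τ.im, u.im; u.im, ζ.im]).PosDef) : τ + 2 * u + ζ ≠ 0 := by
  refine ne_of_apply_ne im (ne_of_gt ?_)
  simpa using hT.add_two_mul_add_pos

theorem Complex.exp_mul_add_mul_sq_div {D : ℂ} (hD : D ≠ 0) (c w a : ℂ) :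
    exp (c * (w + a * D) ^ 2 / D) = exp (c * w ^ 2 / D) * exp (c * (2 * a * w + a ^ 2 * D)) := by
  rw [← exp_add]
  congr 1
  field_simp
  ring

section psi

variable (k : ℤ) (m : ℕ) (τ u ζ : ℂ)

theorem psi_congr_add {z₁ z₂ w₁ w₂ : ℂ} (h : z₁ + z₂ = w₁ + w₂) :
    psi k m τ u ζ z₁ z₂ = psi k m τ u ζ w₁ w₂ := by
  rw [psi, psi, h]

theorem psi_add_mul (hD : τ + 2 * u + ζ ≠ 0) (a z₁ z₂ : ℂ) :
    psi k m τ u ζ (z₁ + a * (τ + 2 * u + ζ)) z₂ = psi k m τ u ζ z₁ z₂ *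
      exp (2 * Real.pi * I * m * (2 * a * (z₁ + z₂) + a ^ 2 * (τ + 2 * u + ζ))) := by
  rw [psi, psi, add_right_comm z₁, exp_mul_add_mul_sq_div hD, ← mul_assoc]

end psi

theorem psi_heisenberg_up_down_duality_general (k : ℤ) (m : ℕ)
    (lam mu kap : ℝ) (τ u ζ z₁ z₂ : ℂ)
    (hT : (!![τ.im, u.im; u.im, ζ.im] : Matrix (Fin 2) (Fin 2) ℝ).PosDef) :
    (psi k m τ u ζ (heisZ₁ lam 0 0 τ u z₁) (heisZ₂ lam 0 0 u ζ z₂) *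
        heisJ m lam 0 0 0 0 τ u ζ z₁ z₂ =
      psi k m τ u ζ (heisZ₁ 0 (-lam) 0 τ u z₁) (heisZ₂ 0 (-lam) 0 u ζ z₂) *
        heisJ m 0 (-lam) 0 0 0 τ u ζ z₁ z₂)
    ∧
    (psi k m τ u ζ (heisZ₁ 0 0 mu τ u z₁) (heisZ₂ 0 0 0 u ζ z₂) *
        heisJ m 0 0 mu 0 kap τ u ζ z₁ z₂ =
      psi k m τ u ζ (heisZ₁ 0 0 0 τ u z₁) (heisZ₂ 0 0 mu u ζ z₂) *
        heisJ m 0 0 0 mu kap τ u ζ z₁ z₂) := by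
  have hshift : heisZ₁ lam 0 0 τ u z₁ + heisZ₂ lam 0 0 u ζ z₂ =
      heisZ₁ 0 (-lam) 0 τ u z₁ + lam * (τ + 2 * u + ζ) + heisZ₂ 0 (-lam) 0 u ζ z₂ := by
    simp only [heisZ₁, heisZ₂]
    push_cast
    ring
  constructor
  · rw [psi_congr_add k m τ u ζ hshift,
      psi_add_mul k m τ u ζ (add_two_mul_add_ne_zero_of_posDef_im hT), mul_assoc, heisJ, heisJ,
      ← exp_add]
    congr 2
    simp only [heisZ₁, heisZ₂]
    push_cast
    ring
  · congr 1
    · exact psi_congr_add k m τ u ζ (by simp only [heisZ₁, heisZ₂]; ring)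
    · simp [heisJ]

theorem psi_heisenberg_up_down_duality (k : ℤ) (m : ℕ) (hm : 0 < m)
    (lam mu kap : ℝ) (τ u ζ z₁ z₂ : ℂ)
    (hT : (!![τ.im, u.im; u.im, ζ.im] : Matrix (Fin 2) (Fin 2) ℝ).PosDef) :
    (psi k m τ u ζ (heisZ₁ lam 0 0 τ u z₁) (heisZ₂ lam 0 0 u ζ z₂) *
        heisJ m lam 0 0 0 0 τ u ζ z₁ z₂ =
      psi k m τ u ζ (heisZ₁ 0 (-lam) 0 τ u z₁) (heisZ₂ 0 (-lam) 0 u ζ z₂) *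
        heisJ m 0 (-lam) 0 0 0 τ u ζ z₁ z₂)
    ∧
    (psi k m τ u ζ (heisZ₁ 0 0 mu τ u z₁) (heisZ₂ 0 0 0 u ζ z₂) *
        heisJ m 0 0 mu 0 kap τ u ζ z₁ z₂ =
      psi k m τ u ζ (heisZ₁ 0 0 0 τ u z₁) (heisZ₂ 0 0 mu u ζ z₂) *
        heisJ m 0 0 0 mu kap τ u ζ z₁ z₂) :=
  psi_heisenberg_up_down_duality_general k m lam mu kap τ u ζ z₁ z₂ hT
end

section
/- Let p be a prime and let m ≥ 1, r₂ and λ be integers with p ∤ 2m. Then the map (n₁₁, n₁₂, r₁) ↦ (n₁₁′, n₁₂′, r₁′) := (p²n₁₁ + pλr₁ + λ²m, pn₁₂ + λr₂, pr₁ + 2λm) is a bijection from ℤ³ onto the set of triples (n₁₁′, n₁₂′, r₁′) ∈ ℤ³ satisfying r₁′ ≡ 2λm (mod p), r₁′² − 4m·n₁₁′ ≡ 0 (mod p²), and r₁′·r₂ − 2m·n₁₂′ ≡ 0 (mod p). Moreover, under this map the invariants transform by r₁′² − 4m·n₁₁′ = p²·(r₁² − 4m·n₁₁) and r₁′·r₂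 − 2m·n₁₂′ = p·(r₁·r₂ − 2m·n₁₂). -/
/-!
Writing `r₁' = p r₁ + 2λm`, the invariants of the image are `p²(r₁² − 4m n₁₁)` and
`p(r₁ r₂ − 2m n₁₂)` by direct expansion. Conversely, given `r₁' ≡ 2λm (mod p)` we
read off `r₁`; then the two divisibility conditions say exactly that
`p ∣ 2m (n₁₂' − λr₂)` and `p² ∣ 4m (n₁₁' − pλr₁ − λ²m)`, and since `p ∤ 2m` the
factors `2m` and `4m` can be cancelled, which produces `n₁₂` and `n₁₁`.
-/

/-- The change of variables attached to the representative `N₁ = diag(p²,1)`: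
`(n₁₁, n₁₂, r₁) ↦ (p²n₁₁ + pλr₁ + λ²m, pn₁₂ + λr₂, pr₁ + 2λm)`. -/
def changeVar (p : ℕ) (m r₂ lam : ℤ) : ℤ × ℤ × ℤ → ℤ × ℤ × ℤ :=
  fun t => ((p : ℤ) ^ 2 * t.1 + (p : ℤ) * lam * t.2.2 + lam ^ 2 * m,
            (p : ℤ) * t.2.1 + lam * r₂,
            (p : ℤ) * t.2.2 + 2 * lam * m)

section changeVar

variable {p : ℕ} {m r₂ lam : ℤ}

theorem changeVar_modEq (n₁₁ n₁₂ r₁ : ℤ) :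
    (changeVar p m r₂ lam (n₁₁, n₁₂, r₁)).2.2 ≡ 2 * lam * m [ZMOD (p : ℤ)] :=
  Int.mul_add_emod_self_left _ _ _

theorem changeVar_discr (n₁₁ n₁₂ r₁ : ℤ) :
    (changeVar p m r₂ lam (n₁₁, n₁₂, r₁)).2.2 ^ 2 -
        4 * m * (changeVar p m r₂ lam (n₁₁, n₁₂, r₁)).1 =
      (p : ℤ) ^ 2 * (r₁ ^ 2 - 4 * m * n₁₁) := by
  simp only [changeVar]
  ring

theorem changeVar_mixedDiscr (n₁₁ n₁₂ r₁ : ℤ) :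
    (changeVar p m r₂ lam (n₁₁, n₁₂, r₁)).2.2 * r₂ -
        2 * m * (changeVar p m r₂ lam (n₁₁, n₁₂, r₁)).2.1 =
      (p : ℤ) * (r₁ * r₂ - 2 * m * n₁₂) := by
  simp only [changeVar]
  ring

theorem changeVar_injective (hp : p ≠ 0) : Function.Injective (changeVar p m r₂ lam) := by
  have hp' : (p : ℤ) ≠ 0 := by exact_mod_cast hp
  rintro ⟨n₁₁, n₁₂, r₁⟩ ⟨n₁₁', n₁₂', r₁'⟩ h
  simp only [changeVar, Prod.mk.injEq] at h
  obtain ⟨h₁₁, h₁₂, hr⟩ := h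
  obtain rfl : r₁ = r₁' := mul_left_cancel₀ hp' (by linarith)
  obtain rfl : n₁₂ = n₁₂' := mul_left_cancel₀ hp' (by linarith)
  obtain rfl : n₁₁ = n₁₁' := mul_left_cancel₀ (pow_ne_zero 2 hp') (by linarith)
  rfl

theorem exists_changeVar_eq (hpm : IsCoprime (p : ℤ) (2 * m)) {n₁₁' n₁₂' r₁' : ℤ}
    (hr : r₁' ≡ 2 * lam * m [ZMOD (p : ℤ)]) (h₁₁ : (p : ℤ) ^ 2 ∣ r₁' ^ 2 - 4 * m * n₁₁')
    (h₁₂ : (p : ℤ) ∣ r₁' * r₂ - 2 * m * n₁₂') :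
    ∃ t : ℤ × ℤ × ℤ, changeVar p m r₂ lam t = (n₁₁', n₁₂', r₁') := by
  obtain ⟨r₁, hr₁⟩ : (p : ℤ) ∣ r₁' - 2 * lam * m := Int.ModEq.dvd hr.symm
  obtain rfl : r₁' = p * r₁ + 2 * lam * m := by linarith
  rw [show (p * r₁ + 2 * lam * m) * r₂ - 2 * m * n₁₂' =
      p * (r₁ * r₂) - 2 * m * (n₁₂' - lam * r₂) by ring,
    dvd_sub_right (dvd_mul_right _ _)] at h₁₂
  rw [show (p * r₁ + 2 * lam * m) ^ 2 - 4 * m * n₁₁' =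
      p ^ 2 * r₁ ^ 2 - 4 * m * (n₁₁' - (p * lam * r₁ + lam ^ 2 * m)) by ring,
    dvd_sub_right (dvd_mul_right _ _)] at h₁₁
  have hp4m : IsCoprime ((p : ℤ) ^ 2) (4 * m) := by
    have := hpm.of_mul_right_left.mul_right hpm
    rw [show 2 * (2 * m) = 4 * m by ring] at this
    exact this.pow_left
  obtain ⟨n₁₂, hn₁₂⟩ := hpm.dvd_of_dvd_mul_left h₁₂
  obtain ⟨n₁₁, hn₁₁⟩ := hp4m.dvd_of_dvd_mul_left h₁₁
  refine ⟨(n₁₁, n₁₂, r₁), ?_⟩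
  simp only [changeVar, Prod.mk.injEq, and_true]
  constructor <;> linarith

end changeVar

theorem changeVar_bijection_and_invariants_general (p : ℕ) (hp : p.Prime) (m : ℤ)
    (r₂ lam : ℤ) (hpm : ¬ (p : ℤ) ∣ 2 * m) :
    (∀ n₁₁ n₁₂ r₁ : ℤ,
      ((changeVar p m r₂ lam (n₁₁, n₁₂, r₁)).2.2 ≡ 2 * lam * m [ZMOD (p : ℤ)]) ∧
      ((p : ℤ) ^ 2 ∣ (changeVar p m r₂ lam (n₁₁, n₁₂, r₁)).2.2 ^ 2 -
          4 * m * (changeVar p m r₂ lam (n₁₁, n₁₂, r₁)).1) ∧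
      ((p : ℤ) ∣ (changeVar p m r₂ lam (n₁₁, n₁₂, r₁)).2.2 * r₂ -
          2 * m * (changeVar p m r₂ lam (n₁₁, n₁₂, r₁)).2.1) ∧
      ((changeVar p m r₂ lam (n₁₁, n₁₂, r₁)).2.2 ^ 2 -
          4 * m * (changeVar p m r₂ lam (n₁₁, n₁₂, r₁)).1 =
        (p : ℤ) ^ 2 * (r₁ ^ 2 - 4 * m * n₁₁)) ∧
      ((changeVar p m r₂ lam (n₁₁, n₁₂, r₁)).2.2 * r₂ -
          2 * m * (changeVar p m r₂ lam (n₁₁, n₁₂, r₁)).2.1 =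
        (p : ℤ) * (r₁ * r₂ - 2 * m * n₁₂)))
    ∧ Function.Injective (changeVar p m r₂ lam)
    ∧ (∀ n₁₁' n₁₂' r₁' : ℤ,
        (r₁' ≡ 2 * lam * m [ZMOD (p : ℤ)]) →
        ((p : ℤ) ^ 2 ∣ r₁' ^ 2 - 4 * m * n₁₁') →
        ((p : ℤ) ∣ r₁' * r₂ - 2 * m * n₁₂') →
        ∃ t : ℤ × ℤ × ℤ, changeVar p m r₂ lam t = (n₁₁', n₁₂', r₁')) := by
  have hcop : IsCoprime (p : ℤ) (2 * m) :=
    (Nat.prime_iff_prime_int.mp hp).coprime_iff_not_dvd.mpr hpm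
  refine ⟨fun n₁₁ n₁₂ r₁ => ⟨changeVar_modEq n₁₁ n₁₂ r₁, ?_, ?_,
    changeVar_discr n₁₁ n₁₂ r₁, changeVar_mixedDiscr n₁₁ n₁₂ r₁⟩,
    changeVar_injective hp.ne_zero, fun _ _ _ => exists_changeVar_eq hcop⟩
  · exact (changeVar_discr n₁₁ n₁₂ r₁).symm ▸ dvd_mul_right _ _
  · exact (changeVar_mixedDiscr n₁₁ n₁₂ r₁).symm ▸ dvd_mul_right _ _

theorem changeVar_bijection_and_invariants (p : ℕ) (hp : p.Prime) (m : ℤ)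
    (hm : 1 ≤ m) (r₂ lam : ℤ) (hpm : ¬ (p : ℤ) ∣ 2 * m) :
    (∀ n₁₁ n₁₂ r₁ : ℤ,
      ((changeVar p m r₂ lam (n₁₁, n₁₂, r₁)).2.2 ≡ 2 * lam * m [ZMOD (p : ℤ)]) ∧
      ((p : ℤ) ^ 2 ∣ (changeVar p m r₂ lam (n₁₁, n₁₂, r₁)).2.2 ^ 2 -
          4 * m * (changeVar p m r₂ lam (n₁₁, n₁₂, r₁)).1) ∧
      ((p : ℤ) ∣ (changeVar p m r₂ lam (n₁₁, n₁₂, r₁)).2.2 * r₂ -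
          2 * m * (changeVar p m r₂ lam (n₁₁, n₁₂, r₁)).2.1) ∧
      ((changeVar p m r₂ lam (n₁₁, n₁₂, r₁)).2.2 ^ 2 -
          4 * m * (changeVar p m r₂ lam (n₁₁, n₁₂, r₁)).1 =
        (p : ℤ) ^ 2 * (r₁ ^ 2 - 4 * m * n₁₁)) ∧
      ((changeVar p m r₂ lam (n₁₁, n₁₂, r₁)).2.2 * r₂ -
          2 * m * (changeVar p m r₂ lam (n₁₁, n₁₂, r₁)).2.1 =
        (p : ℤ) * (r₁ * r₂ - 2 * m * n₁₂)))
    ∧ Function.Injective (changeVar p m r₂ lam)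
    ∧ (∀ n₁₁' n₁₂' r₁' : ℤ,
        (r₁' ≡ 2 * lam * m [ZMOD (p : ℤ)]) →
        ((p : ℤ) ^ 2 ∣ r₁' ^ 2 - 4 * m * n₁₁') →
        ((p : ℤ) ∣ r₁' * r₂ - 2 * m * n₁₂') →
        ∃ t : ℤ × ℤ × ℤ, changeVar p m r₂ lam t = (n₁₁', n₁₂', r₁')) :=
  changeVar_bijection_and_invariants_general p hp m r₂ lam hpm
end
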